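/- Let P be a complex n×n matrix. Then P is positive definite (i.e., P + P* is Hermitian positive definite) if and only if I + P is invertible and ‖(I+P)^{-1}(I-P)‖ < 1 in the spectral norm. -/

import Mathlib

open Matrix ComplexOrder

noncomputable def specNorm {n : ℕ} (M : Matrix (Fin n) (Fin n) ℂ) : ℝ :=
  ‖Matrix.toEuclideanCLM (𝕜 := ℂ) M‖

noncomputable def evnorm {n : ℕ} (x : Fin n → ℂ) : ℝ :=
  ‖(WithLp.equiv 2 (Fin n → ℂ)).symm x‖

/-- `P` is positive semidefinite in the (possibly non-Hermitian) sense: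
`Re (x* P x) ≥ 0` for all `x`. -/
def IsPSD {n : ℕ} (P : Matrix (Fin n) (Fin n) ℂ) : Prop :=
  ∀ x : Fin n → ℂ, 0 ≤ (star x ⬝ᵥ P *ᵥ x).re

/-- `P` is positive definite in the (possibly non-Hermitian) sense:
`Re (x* P x) > 0` for all nonzero `x`. -/
def IsPD {n : ℕ} (P : Matrix (Fin n) (Fin n) ℂ) : Prop :=
  ∀ x : Fin n → ℂ, x ≠ 0 → 0 < (star x ⬝ᵥ P *ᵥ x).re

/-- The positive semidefinite square root, as defined in the older Mathlib (removed since). -/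
noncomputable def Matrix.PosSemidef.sqrt {𝕜 : Type*} [RCLike 𝕜] {m : Type*} [Fintype m]
    [DecidableEq m] {A : Matrix m m 𝕜} (hA : A.PosSemidef) : Matrix m m 𝕜 :=
  hA.1.eigenvectorUnitary.1 * diagonal ((↑) ∘ (√·) ∘ hA.1.eigenvalues) *
    (star hA.1.eigenvectorUnitary : Matrix m m 𝕜)

/-- `Σ^{-1/2} P Σ^{-1/2}` where `Σ^{1/2}` is the HPD square root of the HPD matrix `Sg`. -/
noncomputable def tild {n : ℕ} (Sg P : Matrix (Fin n) (Fin n) ℂ) (hS : Sg.PosDef) :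
    Matrix (Fin n) (Fin n) ℂ :=
  (hS.posSemidef.sqrt)⁻¹ * P * (hS.posSemidef.sqrt)⁻¹

lemma evnorm_sq {n : ℕ} (x : Fin n → ℂ) : evnorm x ^ 2 = (star x ⬝ᵥ x).re := by
  rw [evnorm, ← @inner_self_eq_norm_sq ℂ, WithLp.equiv_symm_apply, EuclideanSpace.inner_toLp_toLp, dotProduct_comm]
  rfl

lemma evnorm_nonneg {n : ℕ} (x : Fin n → ℂ) : 0 ≤ evnorm x := norm_nonneg _

lemma evnorm_pos {n : ℕ} {x : Fin n → ℂ} (hx : x ≠ 0) : 0 < evnorm x := by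
  rw [evnorm]
  refine norm_pos_iff.mpr fun h0 => hx ?_
  have := congrArg (WithLp.equiv 2 (Fin n → ℂ)) h0
  simpa using this

lemma key {n : ℕ} (P : Matrix (Fin n) (Fin n) ℂ) (y : Fin n → ℂ) :
    evnorm ((1 + P) *ᵥ y) ^ 2 - evnorm ((1 - P) *ᵥ y) ^ 2 = 4 * (star y ⬝ᵥ P *ᵥ y).re := by
  rw [evnorm_sq, evnorm_sq]
  have hc : (star (P *ᵥ y) ⬝ᵥ y).re = (star y ⬝ᵥ P *ᵥ y).re := by
    rw [star_dotProduct, Complex.star_def, Complex.conj_re]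
  simp only [Matrix.add_mulVec, Matrix.sub_mulVec, Matrix.one_mulVec, star_add, star_sub,
    dotProduct_add, dotProduct_sub, add_dotProduct, sub_dotProduct, Complex.add_re,
    Complex.sub_re]
  linarith

lemma norm_apply_eq {n : ℕ} (M : Matrix (Fin n) (Fin n) ℂ) (x : Fin n → ℂ) :
    ‖Matrix.toEuclideanCLM (𝕜 := ℂ) M ((WithLp.equiv 2 (Fin n → ℂ)).symm x)‖
      = evnorm (M *ᵥ x) := by
  rw [WithLp.equiv_symm_apply, Matrix.toEuclideanCLM_toLp]
  rfl

lemma specNorm_lt_one {n : ℕ} {M : Matrix (Fin n) (Fin n) ℂ}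
    (h : ∀ x : Fin n → ℂ, x ≠ 0 → evnorm (M *ᵥ x) < evnorm x) : specNorm M < 1 := by
  set T := Matrix.toEuclideanCLM (𝕜 := ℂ) M with hTdef
  have hT : ∀ z : EuclideanSpace ℂ (Fin n), z ≠ 0 → ‖T z‖ < ‖z‖ := by
    intro z hz
    set x : Fin n → ℂ := WithLp.equiv 2 (Fin n → ℂ) z with hxdef
    have hzx : (WithLp.equiv 2 (Fin n → ℂ)).symm x = z := (WithLp.equiv 2 _).symm_apply_apply z
    have hxne : x ≠ 0 := by
      intro h0
      apply hz
      rw [← hzx, h0]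
      rfl
    have h1 : ‖T z‖ = evnorm (M *ᵥ x) := by rw [← hzx, hTdef, norm_apply_eq]
    have h2 : ‖z‖ = evnorm x := by rw [← hzx]; rfl
    rw [h1, h2]
    exact h x hxne
  rw [specNorm, ← hTdef]
  rcases eq_or_ne n 0 with hn | hn
  · subst hn
    have hz : ∀ z : EuclideanSpace ℂ (Fin 0), T z = 0 := by
      intro z
      have : z = 0 := Subsingleton.elim _ _
      rw [this, map_zero]
    have hT0 : T = 0 := by ext z; rw [hz]; rfl
    rw [hT0, norm_zero]
    exact zero_lt_one
  · haveI : Nonempty (Fin n) := ⟨⟨0, Nat.pos_of_ne_zero hn⟩⟩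
    haveI : Nontrivial (EuclideanSpace ℂ (Fin n)) := by
      refine ⟨(WithLp.equiv 2 (Fin n → ℂ)).symm (fun _ => 1), 0, fun h0 => ?_⟩
      have := congrArg (fun z => WithLp.equiv 2 (Fin n → ℂ) z) h0
      simp only [Equiv.apply_symm_apply] at this
      have := congrFun this ⟨0, Nat.pos_of_ne_zero hn⟩
      simp at this
    obtain ⟨z₀, hz₀mem, hmax⟩ := (isCompact_sphere (0 : EuclideanSpace ℂ (Fin n)) 1).exists_isMaxOn
      (NormedSpace.sphere_nonempty.mpr zero_le_one)
      ((continuous_norm.comp T.continuous).continuousOn)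
    have hmax' : ∀ z ∈ Metric.sphere (0 : EuclideanSpace ℂ (Fin n)) 1, ‖T z‖ ≤ ‖T z₀‖ := hmax
    have hz₀norm : ‖z₀‖ = 1 := mem_sphere_zero_iff_norm.mp hz₀mem
    have hz₀ne : z₀ ≠ 0 := by intro h0; rw [h0, norm_zero] at hz₀norm; linarith
    have hlt : ‖T z₀‖ < 1 := by
      have := hT z₀ hz₀ne
      rwa [hz₀norm] at this
    refine lt_of_le_of_lt (T.opNorm_le_bound (norm_nonneg _) ?_) hlt
    intro z
    rcases eq_or_ne z 0 with rfl | hzne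
    · simp
    · have hzn : ‖z‖ ≠ 0 := norm_ne_zero_iff.mpr hzne
      have hu : ‖((‖z‖⁻¹ : ℂ) • z)‖ = 1 := by
        rw [norm_smul]
        simp only [norm_inv, Complex.norm_real, Real.norm_eq_abs, abs_norm]
        field_simp
      have h3 := hmax' _ (mem_sphere_zero_iff_norm.mpr hu)
      rw [_root_.map_smul, norm_smul] at h3
      have h4 : ‖(‖z‖⁻¹ : ℂ)‖ = ‖z‖⁻¹ := by
        simp only [norm_inv, Complex.norm_real, Real.norm_eq_abs, abs_norm]
      rw [h4] at h3
      have hzpos : 0 < ‖z‖ := lt_of_le_of_ne (norm_nonneg _) (Ne.symm hzn)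
      calc ‖T z‖ = ‖z‖ * (‖z‖⁻¹ * ‖T z‖) := by field_simp
        _ ≤ ‖z‖ * ‖T z₀‖ := by
            apply mul_le_mul_of_nonneg_left h3 (norm_nonneg _)
        _ = ‖T z₀‖ * ‖z‖ := mul_comm _ _

lemma lt_of_specNorm {n : ℕ} {M : Matrix (Fin n) (Fin n) ℂ} (h : specNorm M < 1)
    {x : Fin n → ℂ} (hx : x ≠ 0) : evnorm (M *ᵥ x) < evnorm x := by
  have h1 : evnorm (M *ᵥ x) ≤ specNorm M * evnorm x := by
    rw [← norm_apply_eq]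
    exact (Matrix.toEuclideanCLM (𝕜 := ℂ) M).le_opNorm _
  have h2 : specNorm M * evnorm x < 1 * evnorm x :=
    mul_lt_mul_of_pos_right h (evnorm_pos hx)
  rw [one_mul] at h2
  exact lt_of_le_of_lt h1 h2

lemma cayley_comm {n : ℕ} (P : Matrix (Fin n) (Fin n) ℂ) (hdet : IsUnit (1 + P).det) :
    (1 + P)⁻¹ * (1 - P) = (1 - P) * (1 + P)⁻¹ := by
  have h1 : (1 + P) * (1 - P) = (1 - P) * (1 + P) := by noncomm_ring
  have h2 : (1 + P)⁻¹ * ((1 + P) * (1 - P)) * (1 + P)⁻¹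
      = (1 + P)⁻¹ * ((1 - P) * (1 + P)) * (1 + P)⁻¹ := by rw [h1]
  rw [← mul_assoc, Matrix.nonsing_inv_mul _ hdet, one_mul] at h2
  rw [mul_assoc, mul_assoc, Matrix.mul_nonsing_inv _ hdet, mul_one] at h2
  exact h2.symm

theorem stmt3 {n : ℕ} (P : Matrix (Fin n) (Fin n) ℂ) :
    IsPD P ↔ IsUnit (1 + P) ∧ specNorm ((1 + P)⁻¹ * (1 - P)) < 1 := by
  constructor
  · intro hP
    have hunit : IsUnit (1 + P) := by
      rw [Matrix.isUnit_iff_isUnit_det, isUnit_iff_ne_zero]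
      intro hdet0
      obtain ⟨v, hv, hv0⟩ := (Matrix.exists_mulVec_eq_zero_iff).mpr hdet0
      have h1 := hP v hv
      have h2 : (star v ⬝ᵥ (1 + P) *ᵥ v) = 0 := by rw [hv0, dotProduct_zero]
      rw [Matrix.add_mulVec, Matrix.one_mulVec, dotProduct_add] at h2
      have hre := congrArg Complex.re h2
      rw [Complex.add_re, Complex.zero_re] at hre
      have hvv : 0 < (star v ⬝ᵥ v).re := by
        rw [← evnorm_sq]
        exact pow_pos (evnorm_pos hv) 2
      linarith
    refine ⟨hunit, ?_⟩
    have hdet : IsUnit (1 + P).det := (Matrix.isUnit_iff_isUnit_det _).mp hunit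
    apply specNorm_lt_one
    intro x hx
    set y : Fin n → ℂ := (1 + P)⁻¹ *ᵥ x with hy
    have hxy : (1 + P) *ᵥ y = x := by
      rw [hy, Matrix.mulVec_mulVec, Matrix.mul_nonsing_inv _ hdet, Matrix.one_mulVec]
    have hyne : y ≠ 0 := by
      intro h0
      apply hx
      rw [← hxy, h0, Matrix.mulVec_zero]
    have hMx : ((1 + P)⁻¹ * (1 - P)) *ᵥ x = (1 - P) *ᵥ y := by
      rw [cayley_comm P hdet, ← Matrix.mulVec_mulVec]
    have hk := key P y
    rw [hxy] at hk
    have hpos := hP y hyne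
    rw [hMx]
    have ha := evnorm_nonneg x
    have hb := evnorm_nonneg ((1 - P) *ᵥ y)
    nlinarith
  · rintro ⟨hunit, hnorm⟩
    have hdet : IsUnit (1 + P).det := (Matrix.isUnit_iff_isUnit_det _).mp hunit
    intro y hy
    set x : Fin n → ℂ := (1 + P) *ᵥ y with hx
    have hyx : (1 + P)⁻¹ *ᵥ x = y := by
      rw [hx, Matrix.mulVec_mulVec, Matrix.nonsing_inv_mul _ hdet, Matrix.one_mulVec]
    have hxne : x ≠ 0 := by
      intro h0
      apply hy
      rw [← hyx, h0, Matrix.mulVec_zero]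
    have hMx : ((1 + P)⁻¹ * (1 - P)) *ᵥ x = (1 - P) *ᵥ y := by
      rw [cayley_comm P hdet, ← Matrix.mulVec_mulVec, hyx]
    have hlt := lt_of_specNorm hnorm hxne
    rw [hMx] at hlt
    have hk := key P y
    rw [← hx] at hk
    have ha := evnorm_nonneg x
    have hb := evnorm_nonneg ((1 - P) *ᵥ y)
    nlinarith
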